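/- Let k > 0, ρ_b·c_b > 0, μ > 0, u ≥ 0, v ≥ 0 with μ·(u+v) > 0 or k·μ² > 0 (so the denominator is nonzero). Set ζ = k·μ²/(ρ_b·c_b) + u·μ and q(z,t) = C·exp(−μ·(z + v·t)) for a constant C. Then T(z,t) = T_b + C·exp(−μ·z)·(exp(ζ·t) − exp(−μ·v·t))/(k·μ² + ρ_b·c_b·μ·(u+v)) satisfies ρ_b·c_b·(∂T/∂t + u·∂T/∂z) = k·∂²T/∂z² + q(z,t) for all z, t, with T(z,0) = T_b. -/

import Mathlib

/-!
Both exponentials `exp (-μ z) exp (λ t)` are separable modes on which the operator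
`ρb cb (∂ₜ + u ∂_z) - k ∂_zz` acts as multiplication by `ρb cb (λ - u μ) - k μ²`.
For `λ = ζ` this factor vanishes, and for `λ = -μ v` it is `-(k μ² + ρb cb μ (u + v))`,
so dividing by that denominator leaves exactly the source `C exp (-μ (z + v t))`.
The two modes agree at `t = 0`, which gives the initial condition.
-/

open Real

theorem hasDerivAt_exp_const_mul (b t : ℝ) :
    HasDerivAt (fun s => exp (b * s)) (b * exp (b * t)) t := by
  simpa [mul_comm] using ((hasDerivAt_id t).const_mul b).exp

theorem deriv_exp_const_mul (b : ℝ) :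
    deriv (fun s => exp (b * s)) = fun s => b * exp (b * s) :=
  funext fun t => (hasDerivAt_exp_const_mul b t).deriv

theorem deriv_exp_const_mul_sub_exp_const_mul (a b t : ℝ) :
    deriv (fun s => exp (a * s) - exp (b * s)) t = a * exp (a * t) - b * exp (b * t) :=
  ((hasDerivAt_exp_const_mul a t).sub (hasDerivAt_exp_const_mul b t)).deriv

/-- With `ζ = k·μ²/(ρb·cb) + u·μ`, the function
`T(z,t) = T_b + C·exp(−μ·z)·(exp(ζ·t) − exp(−μ·v·t))/(k·μ² + ρb·cb·μ·(u+v))`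
solves the 1-D convective heat equation
`ρb·cb·(∂ₜT + u·∂_z T) = k·∂_zz T + C·exp(−μ·(z+v·t))` with `T(z,0) = T_b`. -/
theorem lumen_convective_heat_solution (k ρb cb μ u v C Tb : ℝ)
    (hk : 0 < k) (hρc : 0 < ρb * cb) (hμ : 0 < μ) (hu : 0 ≤ u) (hv : 0 ≤ v)
    (ζ : ℝ) (hζ : ζ = k * μ ^ 2 / (ρb * cb) + u * μ)
    (T : ℝ → ℝ → ℝ)
    (hT : T = fun z t => Tb + C * Real.exp (-μ * z) *
      (Real.exp (ζ * t) - Real.exp (-μ * v * t)) /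
      (k * μ ^ 2 + ρb * cb * μ * (u + v))) :
    (∀ z t : ℝ,
      ρb * cb * (deriv (fun τ => T z τ) t + u * deriv (fun ξ => T ξ t) z) =
        k * deriv (deriv (fun ξ => T ξ t)) z + C * Real.exp (-μ * (z + v * t))) ∧
    (∀ z : ℝ, T z 0 = Tb) := by
  refine ⟨fun z t => ?_, fun z => by simp [hT]⟩
  set D := k * μ ^ 2 + ρb * cb * μ * (u + v) with hD_def
  have hD : D ≠ 0 := by positivity
  have hζ_mode : ρb * cb * ζ = k * μ ^ 2 + ρb * cb * u * μ := by
    rw [hζ, mul_add, mul_div_cancel₀ _ hρc.ne']; ring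
  have time_slice : (fun τ => T z τ) = fun τ =>
      Tb + C * exp (-μ * z) / D * (exp (ζ * τ) - exp (-μ * v * τ)) := by
    funext τ; rw [hT]; ring
  have space_slice : (fun ξ => T ξ t) = fun ξ =>
      Tb + C * (exp (ζ * t) - exp (-μ * v * t)) / D * exp (-μ * ξ) := by
    funext ξ; rw [hT]; ring
  have hsource : exp (-μ * (z + v * t)) = exp (-μ * z) * exp (-μ * v * t) := by
    rw [← exp_add]; ring_nf
  simp only [time_slice, space_slice, deriv_const_add', deriv_const_mul_field',
    deriv_exp_const_mul, deriv_exp_const_mul_sub_exp_const_mul, hsource]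
  have hcancel : C * exp (-μ * z) / D * D = C * exp (-μ * z) := div_mul_cancel₀ _ hD
  linear_combination (C * exp (-μ * z) / D * exp (ζ * t)) * hζ_mode
    - (C * exp (-μ * z) / D * exp (-μ * v * t)) * hD_def + exp (-μ * v * t) * hcancel
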